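/- For PSD operators A₁ and A₂, the minimum of Tr(A₁(I−T)) + Tr(A₂T) over 0 ≤ T ≤ I is attained at T = {A₁ − A₂ ≥ 0}, the orthogonal projection onto the direct sum of eigenspaces of A₁ − A₂ with nonnegative eigenvalues. -/

import Mathlib

/-!
Write `D = A₁ - A₂ = U diag(λ) U*`. The cost of a test `T` is `Tr A₁ - Tr (D T)`, and
`Tr (D T) = ∑ λᵢ Mᵢᵢ` with `M = U* T U`. Since `0 ≤ T ≤ 1` forces `0 ≤ Mᵢᵢ ≤ 1`, this is at most
`∑ max λᵢ 0`, which is exactly the value at `T = U diag(𝟙[λᵢ ≥ 0]) U*`.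
-/

open Matrix ComplexOrder

theorem RCLike.ofReal_mul_le_ofReal_max_zero {𝕜 : Type*} [RCLike 𝕜] (c : ℝ) {m : 𝕜}
    (hm₀ : 0 ≤ m) (hm₁ : m ≤ 1) : (c : 𝕜) * m ≤ ((max c 0 : ℝ) : 𝕜) := by
  rcases le_total 0 c with hc | hc
  · rw [max_eq_left hc]
    simpa using mul_le_mul_of_nonneg_left hm₁ (RCLike.ofReal_nonneg.mpr hc)
  · rw [max_eq_right hc, RCLike.ofReal_zero]
    exact mul_nonpos_of_nonpos_of_nonneg (RCLike.ofReal_nonpos.mpr hc) hm₀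

namespace Matrix

variable {n R 𝕜 : Type*} [DecidableEq n]

theorem diag_le_one_of_posSemidef_one_sub [RCLike 𝕜] {M : Matrix n n 𝕜}
    (h : (1 - M).PosSemidef) (i : n) : M i i ≤ 1 := by
  simpa using h.diag_nonneg (i := i)

variable [Fintype n]

theorem trace_mul_one_sub_add_trace_mul [Ring R] (A B S : Matrix n n R) :
    (A * (1 - S)).trace + (B * S).trace = A.trace - ((A - B) * S).trace := by
  rw [mul_sub, mul_one, sub_mul, trace_sub, trace_sub]
  abel

theorem trace_diagonal_mul [NonUnitalNonAssocSemiring R] (c : n → R) (M : Matrix n n R) :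
    (diagonal c * M).trace = ∑ i, c i * M i i := by
  simp [trace, diagonal_mul]

variable [RCLike 𝕜]

theorem trace_diagonal_mul_le_sum_max_zero (c : n → ℝ) {M : Matrix n n 𝕜} (hM : M.PosSemidef)
    (h1M : (1 - M).PosSemidef) :
    (diagonal (fun i => (c i : 𝕜)) * M).trace ≤ ∑ i, ((max (c i) 0 : ℝ) : 𝕜) := by
  rw [trace_diagonal_mul]
  exact Finset.sum_le_sum fun i _ =>
    RCLike.ofReal_mul_le_ofReal_max_zero _ hM.diag_nonneg (diag_le_one_of_posSemidef_one_sub h1M i)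

theorem PosSemidef.conjStarAlgAut {X : Matrix n n 𝕜} (hX : X.PosSemidef)
    (u : unitary (Matrix n n 𝕜)) : (Unitary.conjStarAlgAut 𝕜 _ u X).PosSemidef :=
  hX.mul_mul_conjTranspose_same _

theorem PosSemidef.conjStarAlgAut_symm {X : Matrix n n 𝕜} (hX : X.PosSemidef)
    (u : unitary (Matrix n n 𝕜)) : ((Unitary.conjStarAlgAut 𝕜 _ u).symm X).PosSemidef :=
  hX.conjTranspose_mul_mul_same _

theorem trace_conjStarAlgAut (u : unitary (Matrix n n 𝕜)) (X : Matrix n n 𝕜) :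
    (Unitary.conjStarAlgAut 𝕜 _ u X).trace = X.trace := by
  rw [Unitary.conjStarAlgAut_apply, trace_mul_cycle, Unitary.coe_star_mul_self, one_mul]

namespace IsHermitian

variable {A : Matrix n n 𝕜} (hA : A.IsHermitian)

/-- The spectral projection `{A ≥ 0}`. -/
noncomputable def nonnegProjection : Matrix n n 𝕜 :=
  (hA.eigenvectorUnitary : Matrix n n 𝕜) *
    diagonal (fun i => if 0 ≤ hA.eigenvalues i then (1 : 𝕜) else 0) *
    star (hA.eigenvectorUnitary : Matrix n n 𝕜)

theorem nonnegProjection_eq_conjStarAlgAut :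
    hA.nonnegProjection = Unitary.conjStarAlgAut 𝕜 _ hA.eigenvectorUnitary
      (diagonal fun i => if 0 ≤ hA.eigenvalues i then 1 else 0) :=
  rfl

theorem one_sub_nonnegProjection_eq_conjStarAlgAut :
    1 - hA.nonnegProjection = Unitary.conjStarAlgAut 𝕜 _ hA.eigenvectorUnitary
      (diagonal fun i => if 0 ≤ hA.eigenvalues i then 0 else 1) := by
  rw [nonnegProjection_eq_conjStarAlgAut, ← map_one (Unitary.conjStarAlgAut 𝕜 _ _), ← map_sub,
    ← diagonal_one, diagonal_sub]
  congr! 2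
  funext i
  split_ifs <;> simp

theorem posSemidef_nonnegProjection : hA.nonnegProjection.PosSemidef := by
  rw [nonnegProjection_eq_conjStarAlgAut]
  refine PosSemidef.conjStarAlgAut (posSemidef_diagonal_iff.mpr fun i => ?_) _
  split_ifs <;> simp

theorem posSemidef_one_sub_nonnegProjection : (1 - hA.nonnegProjection).PosSemidef := by
  rw [one_sub_nonnegProjection_eq_conjStarAlgAut]
  refine PosSemidef.conjStarAlgAut (posSemidef_diagonal_iff.mpr fun i => ?_) _
  split_ifs <;> simp

theorem trace_mul_eq_trace_diagonal_mul (S : Matrix n n 𝕜) :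
    (A * S).trace = (diagonal (fun i => (hA.eigenvalues i : 𝕜)) *
      (Unitary.conjStarAlgAut 𝕜 _ hA.eigenvectorUnitary).symm S).trace := by
  conv_lhs => rw [hA.spectral_theorem, ← (Unitary.conjStarAlgAut 𝕜 _ _).apply_symm_apply S,
    ← map_mul, trace_conjStarAlgAut]
  rfl

theorem trace_mul_nonnegProjection :
    (A * hA.nonnegProjection).trace = ∑ i, ((max (hA.eigenvalues i) 0 : ℝ) : 𝕜) := by
  rw [hA.trace_mul_eq_trace_diagonal_mul, nonnegProjection_eq_conjStarAlgAut,
    StarAlgEquiv.symm_apply_apply, diagonal_mul_diagonal, trace_diagonal]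
  refine Finset.sum_congr rfl fun i _ => ?_
  split_ifs with h
  · simp [max_eq_left h]
  · simp [max_eq_right (not_le.mp h).le]

theorem trace_mul_le_trace_mul_nonnegProjection {S : Matrix n n 𝕜} (hS : S.PosSemidef)
    (h1S : (1 - S).PosSemidef) : (A * S).trace ≤ (A * hA.nonnegProjection).trace := by
  let conj := Unitary.conjStarAlgAut 𝕜 _ hA.eigenvectorUnitary
  have h1S' : (1 - conj.symm S).PosSemidef := by
    rw [← map_one conj.symm, ← map_sub]
    exact h1S.conjStarAlgAut_symm _
  rw [hA.trace_mul_eq_trace_diagonal_mul, trace_mul_nonnegProjection]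
  exact trace_diagonal_mul_le_sum_max_zero _ (hS.conjStarAlgAut_symm _) h1S'

end IsHermitian

end Matrix

theorem holevo_helstrom_optimal_test {d : ℕ}
    (A₁ A₂ : Matrix (Fin d) (Fin d) ℂ)
    (hA₁ : A₁.PosSemidef) (hA₂ : A₂.PosSemidef) :
    let h : (A₁ - A₂).IsHermitian := hA₁.1.sub hA₂.1
    let T : Matrix (Fin d) (Fin d) ℂ :=
      (h.eigenvectorUnitary : Matrix (Fin d) (Fin d) ℂ) *
        Matrix.diagonal (fun i => if 0 ≤ h.eigenvalues i then (1 : ℂ) else 0) *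
        star (h.eigenvectorUnitary : Matrix (Fin d) (Fin d) ℂ)
    T.PosSemidef ∧ (1 - T).PosSemidef ∧
    ∀ T' : Matrix (Fin d) (Fin d) ℂ, T'.PosSemidef → (1 - T').PosSemidef →
      (A₁ * (1 - T)).trace + (A₂ * T).trace
        ≤ (A₁ * (1 - T')).trace + (A₂ * T').trace := by
  intro h T
  refine ⟨h.posSemidef_nonnegProjection, h.posSemidef_one_sub_nonnegProjection,
    fun T' hT' h1T' => ?_⟩
  rw [trace_mul_one_sub_add_trace_mul, trace_mul_one_sub_add_trace_mul]
  exact sub_le_sub_left (h.trace_mul_le_trace_mul_nonnegProjection hT' h1T') _
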